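/- Let g = 01/2/031/3 and w = g^ω(0). Then w avoids the pattern with constants x3x: there is no nonempty word U such that U3U is a factor of w. -/

import Mathlib

def IsFactorOf {α : Type*} (u : List α) (w : ℕ → α) : Prop :=
  ∃ i : ℕ, u = (List.range u.length).map fun k => w (i + k)

/-- The morphism g = 01/2/031/3. -/
def g : ℕ → List ℕ
  | 0 => [0, 1]
  | 1 => [2]
  | 2 => [0, 3, 1]
  | _ => [3]

def IsPrefixOf (l : List ℕ) (w : ℕ → ℕ) : Prop :=
  ∀ i, i < l.length → l[i]? = some (w i)

/-- w is the infinite fixed point g^ω(0): every iterate g^n(0) is a prefix of w. -/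
def IsFixedPointG (w : ℕ → ℕ) : Prop :=
  ∀ n : ℕ, IsPrefixOf ((fun l => l.flatMap g)^[n] [0]) w

/-!
Since `w = g(w)`, the word `w` is cut into the blocks `g(w 0) g(w 1) ⋯`, and since `01, 2, 031, 3`
is a prefix code, a stretch of `w` that starts at a block boundary determines the letters it came
from. Locating the ends of an occurrence of `U3U` among the blocks and desubstituting gives an
occurrence of one of `U'3U'`, `aU'2U'` (`a ∈ {0, 2}`), `1U'1U'` or `aU'0U'` (with a condition on the
letter after it) with `0 < |U'| < |U|`, and each of these four shapes desubstitutes in the same way.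
The only cases where `U'` is not shorter are those where `U` is made of the one-letter blocks `2`
and `3`; there the neighbourhood of the centre is impossible. Infinite descent concludes.
-/

namespace WordMorphism

open Finset

variable {α : Type*} (σ : α → List α) (w : ℕ → α)

def blockStart (m : ℕ) : ℕ := ∑ k ∈ range m, (σ (w k)).length

/-- `w = σ(w)`, read block by block: `blockStart σ w m` is where `σ (w m)` starts in `σ(w)`. -/
def IsFixedPoint : Prop :=
  ∀ m j (hj : j < (σ (w m)).length), w (blockStart σ w m + j) = (σ (w m))[j]

variable {σ w}

theorem blockStart_succ (m : ℕ) :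
    blockStart σ w (m + 1) = blockStart σ w m + (σ (w m)).length :=
  sum_range_succ _ _

theorem blockStart_add (m n : ℕ) :
    blockStart σ w (m + n) = blockStart σ w m + ∑ j ∈ range n, (σ (w (m + j))).length :=
  sum_range_add _ _ _

theorem blockStart_le_add (m n : ℕ) : blockStart σ w m ≤ blockStart σ w (m + n) := by
  rw [blockStart_add]; exact Nat.le_add_right _ _

theorem blockStart_add_add_eq {m₁ m₂ n : ℕ} (h : ∀ j < n, σ (w (m₁ + j)) = σ (w (m₂ + j))) :
    blockStart σ w (m₂ + n) + blockStart σ w m₁ = blockStart σ w (m₁ + n) + blockStart σ w m₂ := by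
  rw [blockStart_add, blockStart_add m₁,
    sum_congr rfl fun j hj => congrArg List.length (h j (mem_range.mp hj)).symm]
  omega

theorem blockStart_lt_succ (hσ : ∀ a, σ a ≠ []) (m : ℕ) :
    blockStart σ w m < blockStart σ w (m + 1) := by
  rw [blockStart_succ]
  exact Nat.lt_add_of_pos_right (List.length_pos_iff.mpr (hσ _))

theorem blockStart_strictMono (hσ : ∀ a, σ a ≠ []) : StrictMono (blockStart σ w) :=
  strictMono_nat_of_lt_succ (blockStart_lt_succ hσ)

theorem add_le_blockStart_add (hσ : ∀ a, σ a ≠ []) (m n : ℕ) :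
    blockStart σ w m + n ≤ blockStart σ w (m + n) := by
  induction n with
  | zero => rfl
  | succ n ih => exact ih.trans_lt (blockStart_lt_succ hσ _)

theorem exists_blockStart_le_lt (hσ : ∀ a, σ a ≠ []) (p : ℕ) :
    ∃ m, blockStart σ w m ≤ p ∧ p < blockStart σ w (m + 1) := by
  induction p with
  | zero => exact ⟨0, le_rfl, blockStart_lt_succ hσ 0⟩
  | succ p ih =>
    obtain ⟨m, h₁, h₂⟩ := ih
    by_cases h : p + 1 < blockStart σ w (m + 1)
    · exact ⟨m, by omega, h⟩
    · exact ⟨m + 1, by omega, by have := blockStart_lt_succ hσ (w := w) (m + 1); omega⟩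

theorem IsFixedPoint.exists_getElem (hw : IsFixedPoint σ w) (hσ : ∀ a, σ a ≠ []) (p : ℕ) :
    ∃ m j, ∃ hj : j < (σ (w m)).length, blockStart σ w m + j = p ∧ w p = (σ (w m))[j] := by
  obtain ⟨m, h₁, h₂⟩ := exists_blockStart_le_lt hσ (w := w) p
  have hj : p - blockStart σ w m < (σ (w m)).length := by rw [blockStart_succ] at h₂; omega
  refine ⟨m, _, hj, by omega, ?_⟩
  rw [← hw m _ hj, Nat.add_sub_cancel' h₁]

theorem IsFixedPoint.eq_map_range (hw : IsFixedPoint σ w) (m : ℕ) :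
    σ (w m) = (List.range (σ (w m)).length).map fun k => w (blockStart σ w m + k) :=
  List.ext_getElem (by simp) fun k hk _ => by simp [hw m k hk]

theorem IsFixedPoint.image_eq_of_agree (hw : IsFixedPoint σ w)
    (hpf : ∀ a b, σ a <+: σ b → σ a = σ b) {m₁ m₂ : ℕ}
    (h : ∀ k < (σ (w m₁)).length, w (blockStart σ w m₁ + k) = w (blockStart σ w m₂ + k)) :
    σ (w m₁) = σ (w m₂) := by
  set f := fun k => w (blockStart σ w m₂ + k)
  set n₁ := (σ (w m₁)).length
  set n₂ := (σ (w m₂)).length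
  have hpre : ∀ {a b}, a ≤ b → (List.range a).map f <+: (List.range b).map f := by
    intro a b hab
    obtain ⟨c, rfl⟩ := Nat.exists_eq_add_of_le hab
    rw [List.range_add]
    exact (List.prefix_append _ _).map f
  have h₁ : σ (w m₁) <+: (List.range (n₁ + n₂)).map f := by
    conv_lhs => rw [hw.eq_map_range m₁]
    rw [List.map_congr_left fun k hk => h k (List.mem_range.mp hk)]
    exact hpre (Nat.le_add_right _ _)
  have h₂ : σ (w m₂) <+: (List.range (n₁ + n₂)).map f := by
    conv_lhs => rw [hw.eq_map_range m₂]
    exact hpre (Nat.le_add_left _ _)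
  rcases List.prefix_or_prefix_of_prefix h₁ h₂ with h | h
  · exact hpf _ _ h
  · exact (hpf _ _ h).symm

theorem IsFixedPoint.images_eq_of_agree (hw : IsFixedPoint σ w)
    (hpf : ∀ a b, σ a <+: σ b → σ a = σ b) {m₁ m₂ n : ℕ}
    (h : ∀ k, blockStart σ w m₁ + k < blockStart σ w (m₁ + n) →
      w (blockStart σ w m₁ + k) = w (blockStart σ w m₂ + k)) :
    ∀ j < n, σ (w (m₁ + j)) = σ (w (m₂ + j)) := by
  induction n generalizing m₁ m₂ with
  | zero => intro j hj; omega
  | succ n ih =>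
    have hfirst : σ (w m₁) = σ (w m₂) := hw.image_eq_of_agree hpf fun k hk => h k (by
      have := blockStart_le_add (σ := σ) (w := w) (m₁ + 1) n
      rw [blockStart_succ, show m₁ + 1 + n = m₁ + (n + 1) by omega] at this
      omega)
    have hrest := ih (m₁ := m₁ + 1) (m₂ := m₂ + 1) fun k hk => by
      rw [blockStart_succ, show m₁ + 1 + n = m₁ + (n + 1) by omega] at hk
      rw [blockStart_succ, blockStart_succ, ← hfirst, Nat.add_assoc, Nat.add_assoc]
      exact h _ (by omega)
    rintro (_ | j) hj
    · exact hfirst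
    · simpa only [Nat.add_right_comm _ 1 j, Nat.add_assoc] using hrest j (by omega)

theorem exists_iterate_flatMap_eq_cons {a : α} {u : List α} (ha : σ a = a :: u) (hu : u ≠ [])
    (hσ : ∀ a, σ a ≠ []) (n : ℕ) :
    ∃ t, (fun l => l.flatMap σ)^[n] [a] = a :: t ∧ n ≤ t.length := by
  induction n with
  | zero => exact ⟨[], rfl, le_rfl⟩
  | succ n ih =>
    obtain ⟨t, ht, hn⟩ := ih
    refine ⟨u ++ t.flatMap σ, ?_, ?_⟩
    · rw [Function.iterate_succ_apply', ht, List.flatMap_cons, ha]; rfl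
    have hlen : t.length ≤ (t.flatMap σ).length := by
      rw [List.length_flatMap, ← List.length_map (fun a => (σ a).length)]
      exact List.length_le_sum_of_one_le _ fun k hk => by
        obtain ⟨b, -, rfl⟩ := List.mem_map.mp hk
        exact List.length_pos_iff.mpr (hσ b)
    have := List.length_pos_iff.mpr hu
    simp only [List.length_append]
    omega

theorem isFixedPoint_of_prefixes (l : ℕ → List α) (hl : ∀ n, l (n + 1) = (l n).flatMap σ)
    (hlen : ∀ n, n < (l n).length) (hw : ∀ n i (hi : i < (l n).length), (l n)[i] = w i) :
    IsFixedPoint σ w := by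
  intro m j hj
  have hm := hlen m
  have htake : (l m).take m = (List.range m).map w :=
    List.ext_getElem (by simp; omega) fun k hk _ => by simp [hw m k (by simp at hk; omega)]
  have hsplit : l (m + 1) =
      ((l m).take m).flatMap σ ++ (σ (w m) ++ ((l m).drop (m + 1)).flatMap σ) := by
    rw [hl]
    conv_lhs => rw [← List.take_append_drop m (l m)]
    rw [List.flatMap_append, List.drop_eq_getElem_cons hm, List.flatMap_cons, hw m m hm]
  have hstart : (((l m).take m).flatMap σ).length = blockStart σ w m := by
    simp [htake, List.length_flatMap, Function.comp_def, blockStart, Finset.sum, Finset.range,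
      Multiset.range]
  have hi : blockStart σ w m + j < (l (m + 1)).length := by
    rw [hsplit]; simp only [List.length_append, hstart]; omega
  rw [← hw _ _ hi, List.getElem_of_eq hsplit hi, List.getElem_append_right (by omega),
    List.getElem_append_left (by simpa [hstart] using hj)]
  simp [hstart]

end WordMorphism

namespace GFixedPoint

open WordMorphism

theorem g_ne_nil (a : ℕ) : g a ≠ [] := by
  rcases a with _ | _ | _ | a <;> simp [g]

theorem g_prefix_free (a b : ℕ) (h : g a <+: g b) : g a = g b := by
  rcases a with _ | _ | _ | a <;> rcases b with _ | _ | _ | b <;> simp_all [g]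

theorem le_three_of_mem_g {a x : ℕ} (h : x ∈ g a) : x ≤ 3 := by
  rcases a with _ | _ | _ | a <;> simp [g] at h <;> omega

theorem g_injOn {a b : ℕ} (ha : a ≤ 3) (hb : b ≤ 3) (h : g a = g b) : a = b := by
  interval_cases a <;> interval_cases b <;> simp_all [g]

section

variable {w : ℕ → ℕ}

local notation "φ" => blockStart g w

theorem w_le_three (hw : IsFixedPoint g w) (p : ℕ) : w p ≤ 3 := by
  obtain ⟨m, j, hj, -, hp⟩ := hw.exists_getElem g_ne_nil p
  exact hp ▸ le_three_of_mem_g (List.getElem_mem hj)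

theorem blockStart_ne_one (hw : IsFixedPoint g w) (m : ℕ) : w (φ m) ≠ 1 := by
  have := hw m 0 (List.length_pos_iff.mpr (g_ne_nil _))
  rw [Nat.add_zero] at this
  rw [this]
  rcases w m with _ | _ | _ | a <;> simp [g]

theorem block_of_eq_zero (hw : IsFixedPoint g w) {m : ℕ} (h : w m = 0) :
    w (φ m) = 0 ∧ w (φ m + 1) = 1 ∧ φ (m + 1) = φ m + 2 := by
  have h₀ := hw m 0 (by simp [h, g])
  have h₁ := hw m 1 (by simp [h, g])
  simp only [h, g] at h₀ h₁
  exact ⟨h₀, h₁, by rw [blockStart_succ, h]; rfl⟩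

theorem block_of_eq_one (hw : IsFixedPoint g w) {m : ℕ} (h : w m = 1) :
    w (φ m) = 2 ∧ φ (m + 1) = φ m + 1 := by
  have h₀ := hw m 0 (by simp [h, g])
  simp only [h, g] at h₀
  exact ⟨h₀, by rw [blockStart_succ, h]; rfl⟩

theorem block_of_eq_two (hw : IsFixedPoint g w) {m : ℕ} (h : w m = 2) :
    w (φ m) = 0 ∧ w (φ m + 1) = 3 ∧ w (φ m + 2) = 1 ∧ φ (m + 1) = φ m + 3 := by
  have h₀ := hw m 0 (by simp [h, g])
  have h₁ := hw m 1 (by simp [h, g])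
  have h₂ := hw m 2 (by simp [h, g])
  simp only [h, g] at h₀ h₁ h₂
  exact ⟨h₀, h₁, h₂, by rw [blockStart_succ, h]; rfl⟩

theorem block_of_eq_three (hw : IsFixedPoint g w) {m : ℕ} (h : w m = 3) :
    w (φ m) = 3 ∧ φ (m + 1) = φ m + 1 := by
  have h₀ := hw m 0 (by simp [h, g])
  simp only [h, g] at h₀
  exact ⟨h₀, by rw [blockStart_succ, h]; rfl⟩

theorem exists_blockStart_add (hw : IsFixedPoint g w) (q : ℕ) : ∃ m j, φ m + j = q ∧
    (w m = 0 ∧ j < 2 ∨ w m = 1 ∧ j = 0 ∨ w m = 2 ∧ j < 3 ∨ w m = 3 ∧ j = 0) := by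
  obtain ⟨m, j, hj, hq, -⟩ := hw.exists_getElem g_ne_nil q
  refine ⟨m, j, hq, ?_⟩
  have := w_le_three hw m
  rcases (by omega : w m = 0 ∨ w m = 1 ∨ w m = 2 ∨ w m = 3) with h | h | h | h <;>
    simp [h, g] at hj <;> omega

theorem exists_block_of_eq_zero (hw : IsFixedPoint g w) {q : ℕ} (h : w q = 0) :
    ∃ m, φ m = q ∧ (w m = 0 ∨ w m = 2) := by
  obtain ⟨m, j, rfl, ⟨hm, hj⟩ | ⟨hm, rfl⟩ | ⟨hm, hj⟩ | ⟨hm, rfl⟩⟩ := exists_blockStart_add hw q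
  · obtain ⟨-, h₁, -⟩ := block_of_eq_zero hw hm
    interval_cases j
    exacts [⟨m, rfl, .inl hm⟩, by simp_all]
  · simp_all [(block_of_eq_one hw hm).1]
  · obtain ⟨-, h₁, h₂, -⟩ := block_of_eq_two hw hm
    interval_cases j
    exacts [⟨m, rfl, .inr hm⟩, by simp_all, by simp_all]
  · simp_all [(block_of_eq_three hw hm).1]

theorem exists_block_of_eq_one (hw : IsFixedPoint g w) {q : ℕ} (h : w q = 1) :
    ∃ m, φ (m + 1) = q + 1 ∧ (w m = 0 ∧ φ m + 1 = q ∨ w m = 2 ∧ φ m + 2 = q) := by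
  obtain ⟨m, j, rfl, ⟨hm, hj⟩ | ⟨hm, rfl⟩ | ⟨hm, hj⟩ | ⟨hm, rfl⟩⟩ := exists_blockStart_add hw q
  · obtain ⟨h₀, -, hs⟩ := block_of_eq_zero hw hm
    interval_cases j
    exacts [by simp_all, ⟨m, by omega, .inl ⟨hm, rfl⟩⟩]
  · simp_all [(block_of_eq_one hw hm).1]
  · obtain ⟨h₀, h₁, -, hs⟩ := block_of_eq_two hw hm
    interval_cases j
    exacts [by simp_all, by simp_all, ⟨m, by omega, .inr ⟨hm, rfl⟩⟩]
  · simp_all [(block_of_eq_three hw hm).1]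

theorem exists_block_of_eq_two (hw : IsFixedPoint g w) {q : ℕ} (h : w q = 2) :
    ∃ m, φ m = q ∧ w m = 1 := by
  obtain ⟨m, j, rfl, ⟨hm, hj⟩ | ⟨hm, rfl⟩ | ⟨hm, hj⟩ | ⟨hm, rfl⟩⟩ := exists_blockStart_add hw q
  · obtain ⟨h₀, h₁, -⟩ := block_of_eq_zero hw hm
    interval_cases j <;> simp_all
  · exact ⟨m, rfl, hm⟩
  · obtain ⟨h₀, h₁, h₂, -⟩ := block_of_eq_two hw hm
    interval_cases j <;> simp_all
  · simp_all [(block_of_eq_three hw hm).1]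

theorem exists_block_of_eq_three (hw : IsFixedPoint g w) {q : ℕ} (h : w q = 3) :
    (∃ m, φ m + 1 = q ∧ w m = 2) ∨ ∃ m, φ m = q ∧ w m = 3 := by
  obtain ⟨m, j, rfl, ⟨hm, hj⟩ | ⟨hm, rfl⟩ | ⟨hm, hj⟩ | ⟨hm, rfl⟩⟩ := exists_blockStart_add hw q
  · obtain ⟨h₀, h₁, -⟩ := block_of_eq_zero hw hm
    interval_cases j <;> simp_all
  · simp_all [(block_of_eq_one hw hm).1]
  · obtain ⟨h₀, h₁, h₂, -⟩ := block_of_eq_two hw hm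
    interval_cases j
    exacts [by simp_all, .inl ⟨m, rfl, hm⟩, by simp_all]
  · exact .inr ⟨m, rfl, hm⟩

theorem exists_blockStart_eq (hw : IsFixedPoint g w) {p : ℕ} (h₁ : w p ≠ 1)
    (h₃ : w p = 3 → w (p + 1) ≠ 1) : ∃ m, φ m = p := by
  obtain ⟨m, j, rfl, ⟨hm, hj⟩ | ⟨hm, rfl⟩ | ⟨hm, hj⟩ | ⟨hm, rfl⟩⟩ := exists_blockStart_add hw p
  · obtain ⟨-, h₁', -⟩ := block_of_eq_zero hw hm
    interval_cases j
    exacts [⟨m, rfl⟩, absurd h₁' h₁]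
  · exact ⟨m, rfl⟩
  · obtain ⟨-, h₁', h₂', -⟩ := block_of_eq_two hw hm
    interval_cases j
    exacts [⟨m, rfl⟩, absurd h₂' (h₃ h₁'), absurd h₂' h₁]
  · exact ⟨m, rfl⟩

theorem eq_zero_or_eq_two_of_blockStart (hw : IsFixedPoint g w) {m : ℕ} (h : w (φ m) = 0) :
    w m = 0 ∨ w m = 2 := by
  obtain ⟨m', hm', h'⟩ := exists_block_of_eq_zero hw h
  rwa [(blockStart_strictMono g_ne_nil).injective hm'] at h'

theorem blockStart_succ_of_eq_three (hw : IsFixedPoint g w) {m : ℕ} (h : w (φ m) = 3) :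
    φ (m + 1) = φ m + 1 := by
  have := w_le_three hw m
  rcases (by omega : w m = 0 ∨ w m = 1 ∨ w m = 2 ∨ w m = 3) with hm | hm | hm | hm
  · simp [(block_of_eq_zero hw hm).1] at h
  · simp [(block_of_eq_one hw hm).1] at h
  · simp [(block_of_eq_two hw hm).1] at h
  · exact (block_of_eq_three hw hm).2

theorem succ_ne_one_of_blockStart_eq_three (hw : IsFixedPoint g w) {m : ℕ} (h : w (φ m) = 3) :
    w (φ m + 1) ≠ 1 :=
  blockStart_succ_of_eq_three hw h ▸ blockStart_ne_one hw (m + 1)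

theorem succ_of_eq_zero (hw : IsFixedPoint g w) {q : ℕ} (h : w q = 0) :
    w (q + 1) = 1 ∨ w (q + 1) = 3 ∧ w (q + 2) = 1 := by
  obtain ⟨m, rfl, hm | hm⟩ := exists_block_of_eq_zero hw h
  · exact .inl (block_of_eq_zero hw hm).2.1
  · exact .inr ⟨(block_of_eq_two hw hm).2.1, (block_of_eq_two hw hm).2.2.1⟩

theorem succ_ne_one_of_eq_one (hw : IsFixedPoint g w) {q : ℕ} (h : w q = 1) : w (q + 1) ≠ 1 := by
  obtain ⟨m, hm, -⟩ := exists_block_of_eq_one hw h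
  exact hm ▸ blockStart_ne_one hw (m + 1)

theorem succ_ne_two_of_eq_two (hw : IsFixedPoint g w) {q : ℕ} (h : w q = 2) : w (q + 1) ≠ 2 := by
  intro h'
  obtain ⟨m, rfl, hm⟩ := exists_block_of_eq_two hw h
  obtain ⟨m', hm', hm''⟩ := exists_block_of_eq_two hw h'
  rw [← (block_of_eq_one hw hm).2, (blockStart_strictMono g_ne_nil).injective.eq_iff] at hm'
  exact succ_ne_one_of_eq_one hw hm (hm' ▸ hm'')

theorem succ_ne_two (hw : IsFixedPoint g w) {q : ℕ} (h : w q = 0 ∨ w q = 2) : w (q + 1) ≠ 2 := by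
  rcases h with h | h
  · rcases succ_of_eq_zero hw h with h' | h' <;> omega
  · exact succ_ne_two_of_eq_two hw h

theorem lt_blockStart (hw₀ : w 0 = 0) {m : ℕ} (hm : 0 < m) : m < φ m := by
  have h₁ := add_le_blockStart_add g_ne_nil (w := w) 1 (m - 1)
  have h₂ : φ 1 = 2 := by rw [blockStart_succ, hw₀]; rfl
  rw [Nat.add_sub_cancel' hm] at h₁
  omega

theorem succ_ne_three_of_eq_three (hw : IsFixedPoint g w) (hw₀ : w 0 = 0) {q : ℕ} (h : w q = 3) :
    w (q + 1) ≠ 3 := by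
  induction q using Nat.strong_induction_on with
  | _ q ih =>
  intro h'
  rcases exists_block_of_eq_three hw h with ⟨m, rfl, hm⟩ | ⟨m, rfl, hm⟩
  · simp [(block_of_eq_two hw hm).2.2.1] at h'
  rcases exists_block_of_eq_three hw h' with ⟨m', hm', hm''⟩ | ⟨m', hm', hm''⟩
  · rw [Nat.add_right_cancel_iff, (blockStart_strictMono g_ne_nil).injective.eq_iff] at hm'
    subst hm'; omega
  · rw [← (block_of_eq_three hw hm).2, (blockStart_strictMono g_ne_nil).injective.eq_iff] at hm'
    have hm₀ : 0 < m := Nat.pos_of_ne_zero fun h₀ => by simp [h₀, hw₀] at hm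
    exact ih m (lt_blockStart hw₀ hm₀) hm (hm' ▸ hm'')

theorem eq_one_or_three_of_blockStart_add_eq (hw : IsFixedPoint g w) {m n j : ℕ}
    (h : φ (m + n) = φ m + n) (hj : j < n) : w (m + j) = 1 ∨ w (m + j) = 3 := by
  have h₁ := add_le_blockStart_add g_ne_nil (w := w) m j
  have h₂ := add_le_blockStart_add g_ne_nil (w := w) (m + j + 1) (n - (j + 1))
  have h₃ := blockStart_lt_succ g_ne_nil (w := w) (m + j)
  rw [show m + j + 1 + (n - (j + 1)) = m + n by omega] at h₂
  have := w_le_three hw (m + j)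
  rcases (by omega : w (m + j) = 0 ∨ w (m + j) = 1 ∨ w (m + j) = 2 ∨ w (m + j) = 3)
    with h' | h' | h' | h'
  · have := (block_of_eq_zero hw h').2.2; omega
  · exact .inl h'
  · have := (block_of_eq_two hw h').2.2.2; omega
  · exact .inr h'

theorem not_three_between (hw : IsFixedPoint g w) (hw₀ : w 0 = 0) {q : ℕ}
    (h₁ : w q = 1 ∨ w q = 3) (h₂ : w (q + 1) = 3) (h₃ : w (q + 2) = 1 ∨ w (q + 2) = 3) : False := by
  rcases exists_block_of_eq_three hw h₂ with ⟨m, hm, hm'⟩ | ⟨m, hm, -⟩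
  · have := (block_of_eq_two hw hm').1
    rw [Nat.add_right_cancel hm] at this
    omega
  · have := succ_ne_one_of_blockStart_eq_three hw (hm ▸ h₂)
    rw [hm] at this
    change w (q + 2) ≠ 1 at this
    exact succ_ne_three_of_eq_three hw hw₀ h₂ (by change w (q + 2) = 3; omega)

theorem not_one_run_one (hw : IsFixedPoint g w) {q n : ℕ} (h₁ : w q = 1)
    (hrun : ∀ j < n, w (q + 1 + j) = 1 ∨ w (q + 1 + j) = 3) (h₂ : w (q + 1 + n) = 1) : False := by
  obtain ⟨m, -, ⟨hm, hpos⟩ | ⟨hm, hpos⟩⟩ := exists_block_of_eq_one hw h₂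
  · have h₀ := (block_of_eq_zero hw hm).1
    rcases n with _ | n
    · simp_all
    · have := hrun n (by omega)
      rw [show q + 1 + n = φ m by omega] at this
      omega
  · obtain ⟨h₀, h₃, -⟩ := block_of_eq_two hw hm
    rcases n with _ | _ | n
    · rw [show φ m + 1 = q by omega] at h₃; omega
    · rw [show φ m = q by omega] at h₀; omega
    · have := hrun n (by omega)
      rw [show q + 1 + n = φ m by omega] at this
      omega

end

def IsGappedSquareAt (w : ℕ → ℕ) (i n : ℕ) : Prop := ∀ k < n, w (i + k) = w (i + n + 1 + k)

theorem IsGappedSquareAt.head {w : ℕ → ℕ} {i n : ℕ} (hx : IsGappedSquareAt w i n) (hn : 0 < n) :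
    w i = w (i + n + 1) :=
  hx 0 hn

inductive Forbidden (w : ℕ → ℕ) (n : ℕ) : Prop
  | three (i : ℕ) : IsGappedSquareAt w i n → w (i + n) = 3 → Forbidden w n
  | two (i : ℕ) : w i = 0 ∨ w i = 2 → IsGappedSquareAt w (i + 1) n → w (i + 1 + n) = 2 →
      Forbidden w n
  | one (i : ℕ) : w i = 1 → IsGappedSquareAt w (i + 1) n → w (i + 1 + n) = 1 → Forbidden w n
  | zero (i : ℕ) : w i = 0 ∨ w i = 2 ∧ (w (i + 2 * n + 2) = 0 ∨ w (i + 2 * n + 2) = 2) →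
      IsGappedSquareAt w (i + 1) n → w (i + 1 + n) = 0 → Forbidden w n

section

variable {w : ℕ → ℕ}

local notation "φ" => blockStart g w

/-- In `U c U` at `i`, block `m` starts at offset `a` of the first `U`, block `m + ν + 1` at offset
`a` of the second, and block `m + ν` contains the centre. -/
theorem desubstitute (hw : IsFixedPoint g w) {i n a m ν : ℕ} (hx : IsGappedSquareAt w i n)
    (h₁ : φ m = i + a) (h₂ : φ (m + ν + 1) = i + n + 1 + a) (h₃ : φ (m + ν) ≤ i + n) :
    IsGappedSquareAt w m ν ∧ φ (m + ν + 1 + ν) = φ (m + ν + 1) + (φ (m + ν) - φ m) := by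
  have himg := hw.images_eq_of_agree g_prefix_free (m₁ := m) (m₂ := m + ν + 1) (n := ν)
    fun k hk => by
      rw [h₁, h₂, Nat.add_assoc i, Nat.add_assoc (i + n + 1)]
      exact hx (a + k) (by omega)
  refine ⟨fun j hj => g_injOn (w_le_three hw _) (w_le_three hw _) (himg j hj), ?_⟩
  have := blockStart_add_add_eq himg
  have := blockStart_le_add (σ := g) (w := w) m ν
  omega

theorem exists_shorter_of_three_inner (hw : IsFixedPoint g w) {i n m : ℕ} (hn : 0 < n)
    (hx : IsGappedSquareAt w i n) (hm : φ m + 1 = i + n) (hm₂ : w m = 2) :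
    ∃ n' < n, 0 < n' ∧ Forbidden w n' := by
  obtain ⟨h₀, -, h₂, hs⟩ := block_of_eq_two hw hm₂
  have hi : w i = 1 := by rw [hx.head hn, show i + n + 1 = φ m + 2 by omega, h₂]
  have hn₂ : 2 ≤ n := by
    by_contra
    rw [show φ m = i by omega] at h₀
    omega
  obtain ⟨m₁, hm₁, hctx⟩ := exists_block_of_eq_one hw hi
  replace hctx : w m₁ = 0 ∨ w m₁ = 2 := by omega
  obtain ⟨ν, rfl⟩ := Nat.exists_eq_add_of_le
    ((blockStart_strictMono g_ne_nil).le_iff_le.mp (show φ (m₁ + 1) ≤ φ m by omega))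
  obtain ⟨hsq, -⟩ := desubstitute hw hx (a := 1) (m := m₁ + 1) (ν := ν) (by omega) (by omega)
    (by omega)
  have hν := add_le_blockStart_add g_ne_nil (w := w) (m₁ + 1) ν
  rcases Nat.eq_zero_or_pos ν with rfl | hν₀
  · exact absurd hm₂ (succ_ne_two hw hctx)
  · exact ⟨ν, by omega, hν₀, .two m₁ hctx hsq hm₂⟩

theorem not_three_of_blockStart_add_eq (hw : IsFixedPoint g w) (hw₀ : w 0 = 0) {m n : ℕ}
    (hn : 0 < n) (hx : IsGappedSquareAt w m n) (hc : w (m + n) = 3) (h : φ (m + n) = φ m + n) :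
    False := by
  have hlast := eq_one_or_three_of_blockStart_add_eq hw h (j := n - 1) (by omega)
  have hfirst := eq_one_or_three_of_blockStart_add_eq hw h (j := 0) hn
  rw [Nat.add_zero, hx.head hn] at hfirst
  rw [show m + (n - 1) = m + n - 1 by omega] at hlast
  exact not_three_between hw hw₀ hlast (by rwa [Nat.sub_add_cancel (by omega)])
    (by rwa [show m + n - 1 + 2 = m + n + 1 by omega])

theorem exists_shorter_of_three_block (hw : IsFixedPoint g w) (hw₀ : w 0 = 0) {i n m : ℕ}
    (hn : 0 < n) (hx : IsGappedSquareAt w i n) (hm : φ m = i + n) (hm₃ : w m = 3) :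
    ∃ n' < n, 0 < n' ∧ Forbidden w n' := by
  obtain ⟨h₀, hs⟩ := block_of_eq_three hw hm₃
  have hnext : w (i + n + 1) ≠ 1 := by rw [← hm, ← hs]; exact blockStart_ne_one hw _
  -- `U` starts at a block boundary, as its second copy does.
  obtain ⟨m₁, hm₁⟩ := exists_blockStart_eq hw (p := i) (hx.head hn ▸ hnext) fun h₃ => by
    have := succ_ne_one_of_blockStart_eq_three hw (m := m + 1) (by rw [hs, hm, ← hx.head hn, h₃])
    rcases Nat.lt_or_ge n 2 with hn₁ | hn₂
    · rw [show i + 1 = φ m by omega, h₀]; omega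
    · rw [hs, hm] at this
      rwa [hx 1 hn₂]
  obtain ⟨ν, rfl⟩ := Nat.exists_eq_add_of_le
    ((blockStart_strictMono g_ne_nil).le_iff_le.mp (show φ m₁ ≤ φ m by omega))
  obtain ⟨hsq, -⟩ := desubstitute hw hx (a := 0) (m := m₁) (ν := ν) (by omega) (by omega) (by omega)
  have hν := add_le_blockStart_add g_ne_nil (w := w) m₁ ν
  have hν₀ : 0 < ν := Nat.pos_of_ne_zero fun h => by simp [h] at hm; omega
  rcases Nat.lt_or_ge ν n with hνn | hνn
  · exact ⟨ν, hνn, hν₀, .three m₁ hsq hm₃⟩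
  · exact (not_three_of_blockStart_add_eq hw hw₀ hν₀ hsq hm₃ (by omega)).elim

theorem exists_shorter_of_three (hw : IsFixedPoint g w) (hw₀ : w 0 = 0) {i n : ℕ} (hn : 0 < n)
    (hx : IsGappedSquareAt w i n) (hc : w (i + n) = 3) : ∃ n' < n, 0 < n' ∧ Forbidden w n' := by
  rcases exists_block_of_eq_three hw hc with ⟨m, hm, hm₂⟩ | ⟨m, hm, hm₃⟩
  exacts [exists_shorter_of_three_inner hw hn hx hm hm₂,
    exists_shorter_of_three_block hw hw₀ hn hx hm hm₃]

theorem exists_shorter_of_two (hw : IsFixedPoint g w) {i n : ℕ} (hn : 0 < n)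
    (hctx : w i = 0 ∨ w i = 2) (hx : IsGappedSquareAt w (i + 1) n) (hc : w (i + 1 + n) = 2) :
    ∃ n' < n, 0 < n' ∧ Forbidden w n' := by
  obtain ⟨m, hm, hm₁⟩ := exists_block_of_eq_two hw hc
  have hs := (block_of_eq_one hw hm₁).2
  have hnext : w (i + 1) ≠ 1 := by rw [hx.head hn, ← hm, ← hs]; exact blockStart_ne_one hw _
  rcases hctx with h₀ | h₂
  · obtain ⟨h₃, h₁⟩ := (succ_of_eq_zero hw h₀).resolve_left hnext
    have := succ_ne_one_of_blockStart_eq_three hw (m := m + 1) (by rw [hs, hm, ← hx.head hn, h₃])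
    rcases Nat.lt_or_ge n 2 with hn₁ | hn₂
    · rw [show i + 1 + n = i + 2 by omega] at hc; omega
    · have h₁' := hx 1 hn₂
      rw [hs, hm] at this
      rw [show i + 1 + 1 = i + 2 by omega, h₁] at h₁'
      exact absurd h₁'.symm this
  · obtain ⟨mi, hmi, hmi₁⟩ := exists_block_of_eq_two hw h₂
    have hs' := (block_of_eq_one hw hmi₁).2
    obtain ⟨ν, rfl⟩ := Nat.exists_eq_add_of_le
      ((blockStart_strictMono g_ne_nil).le_iff_le.mp (show φ (mi + 1) ≤ φ m by omega))
    obtain ⟨hsq, -⟩ := desubstitute hw hx (a := 0) (m := mi + 1) (ν := ν) (by omega) (by omega)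
      (by omega)
    have hν := add_le_blockStart_add g_ne_nil (w := w) (mi + 1) ν
    have hν₀ : 0 < ν := Nat.pos_of_ne_zero fun h => by simp [h] at hm; omega
    rcases Nat.lt_or_ge ν n with hνn | hνn
    · exact ⟨ν, hνn, hν₀, .one mi hmi₁ hsq hm₁⟩
    · exact (not_one_run_one hw hmi₁
        (fun j hj => eq_one_or_three_of_blockStart_add_eq hw (by omega) hj) hm₁).elim

theorem exists_shorter_of_one_of_block_zero (hw : IsFixedPoint g w) {i n m : ℕ} (hn : 0 < n)
    (hi : w i = 1) (hx : IsGappedSquareAt w (i + 1) n) (hm : φ m = i + n) (hm₀ : w m = 0) :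
    ∃ n' < n, 0 < n' ∧ Forbidden w n' := by
  obtain ⟨mi, hmi, hctx⟩ := exists_block_of_eq_one hw hi
  replace hctx : w mi = 0 ∨ w mi = 2 := by omega
  obtain ⟨h₀, -, hs⟩ := block_of_eq_zero hw hm₀
  obtain ⟨ν, rfl⟩ := Nat.exists_eq_add_of_le
    ((blockStart_strictMono g_ne_nil).le_iff_le.mp (show φ (mi + 1) ≤ φ m by omega))
  obtain ⟨hsq, hend⟩ := desubstitute hw hx (a := 0) (m := mi + 1) (ν := ν) (by omega) (by omega)
    (by omega)
  have hnext : w (mi + 2 * ν + 2) = 0 ∨ w (mi + 2 * ν + 2) = 2 := by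
    rw [show mi + 2 * ν + 2 = mi + 1 + ν + 1 + ν by omega]
    refine eq_zero_or_eq_two_of_blockStart hw ?_
    have := hx (n - 1) (by omega)
    rw [show i + 1 + (n - 1) = φ (mi + 1 + ν) by omega, h₀] at this
    rw [hend, this]
    congr 1
    omega
  have hν := add_le_blockStart_add g_ne_nil (w := w) (mi + 1) ν
  rcases Nat.eq_zero_or_pos ν with rfl | hν₀
  · have := succ_of_eq_zero hw hm₀
    simp only [Nat.add_zero, Nat.mul_zero, Nat.add_assoc, Nat.reduceAdd] at this hnext
    omega
  · exact ⟨ν, by omega, hν₀, .zero mi (hctx.imp_right fun h => ⟨h, hnext⟩) hsq hm₀⟩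

theorem exists_shorter_of_one_of_block_two (hw : IsFixedPoint g w) {i n m : ℕ} (hn : 0 < n)
    (hi : w i = 1) (hx : IsGappedSquareAt w (i + 1) n) (hm : φ m + 1 = i + n) (hm₂ : w m = 2) :
    ∃ n' < n, 0 < n' ∧ Forbidden w n' := by
  obtain ⟨mi, hmi, hctx⟩ := exists_block_of_eq_one hw hi
  replace hctx : w mi = 0 ∨ w mi = 2 := by omega
  obtain ⟨h₀, -, -, hs⟩ := block_of_eq_two hw hm₂
  have hn₂ : 2 ≤ n := by
    by_contra
    rw [show φ m = i by omega] at h₀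
    omega
  obtain ⟨ν, rfl⟩ := Nat.exists_eq_add_of_le
    ((blockStart_strictMono g_ne_nil).le_iff_le.mp (show φ (mi + 1) ≤ φ m by omega))
  obtain ⟨hsq, -⟩ := desubstitute hw hx (a := 0) (m := mi + 1) (ν := ν) (by omega) (by omega)
    (by omega)
  have hν := add_le_blockStart_add g_ne_nil (w := w) (mi + 1) ν
  rcases Nat.eq_zero_or_pos ν with rfl | hν₀
  · exact absurd hm₂ (succ_ne_two hw hctx)
  · exact ⟨ν, by omega, hν₀, .two mi hctx hsq hm₂⟩

theorem exists_shorter_of_one (hw : IsFixedPoint g w) {i n : ℕ} (hn : 0 < n) (hi : w i = 1)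
    (hx : IsGappedSquareAt w (i + 1) n) (hc : w (i + 1 + n) = 1) :
    ∃ n' < n, 0 < n' ∧ Forbidden w n' := by
  obtain ⟨m, -, ⟨hm₀, hm⟩ | ⟨hm₂, hm⟩⟩ := exists_block_of_eq_one hw hc
  · exact exists_shorter_of_one_of_block_zero hw hn hi hx (by omega) hm₀
  · exact exists_shorter_of_one_of_block_two hw hn hi hx (by omega) hm₂

theorem exists_shorter_of_zero_of_block_zero (hw : IsFixedPoint g w) {i n m : ℕ} (hn : 0 < n)
    (hctx : w i = 0 ∨ w i = 2) (hx : IsGappedSquareAt w (i + 1) n) (hm : φ m = i + 1 + n)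
    (hm₀ : w m = 0) : ∃ n' < n, 0 < n' ∧ Forbidden w n' := by
  obtain ⟨-, h₁, hs⟩ := block_of_eq_zero hw hm₀
  have hi₁ : w (i + 1) = 1 := by rwa [hx.head hn, ← hm]
  obtain ⟨mi, hmi, hmi₀⟩ : ∃ mi, φ mi = i ∧ w mi = 0 := by
    rcases hctx with h₀ | h₂
    · obtain ⟨mi, hmi, hmi₀ | hmi₂⟩ := exists_block_of_eq_zero hw h₀
      · exact ⟨mi, hmi, hmi₀⟩
      · have := (block_of_eq_two hw hmi₂).2.1; rw [hmi] at this; omega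
    · obtain ⟨mi, rfl, hmi₁⟩ := exists_block_of_eq_two hw h₂
      have := blockStart_ne_one hw (mi + 1)
      rw [(block_of_eq_one hw hmi₁).2] at this
      exact absurd hi₁ this
  have hs' := (block_of_eq_zero hw hmi₀).2.2
  obtain ⟨ν, rfl⟩ := Nat.exists_eq_add_of_le
    ((blockStart_strictMono g_ne_nil).le_iff_le.mp (show φ (mi + 1) ≤ φ m by omega))
  obtain ⟨hsq, -⟩ := desubstitute hw hx (a := 1) (m := mi + 1) (ν := ν) (by omega) (by omega)
    (by omega)
  have hν := add_le_blockStart_add g_ne_nil (w := w) (mi + 1) ν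
  rcases Nat.eq_zero_or_pos ν with rfl | hν₀
  · rcases succ_of_eq_zero hw hmi₀ with h | h <;> simp_all
  · exact ⟨ν, by omega, hν₀, .zero mi (.inl hmi₀) hsq hm₀⟩

theorem exists_shorter_of_zero_of_block_two (hw : IsFixedPoint g w) {i n m : ℕ} (hn : 0 < n)
    (hctx : w i = 0 ∨ w i = 2 ∧ (w (i + 2 * n + 2) = 0 ∨ w (i + 2 * n + 2) = 2))
    (hx : IsGappedSquareAt w (i + 1) n) (hm : φ m = i + 1 + n) (hm₂ : w m = 2) :
    ∃ n' < n, 0 < n' ∧ Forbidden w n' := by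
  obtain ⟨hc, h₃, h₁, hs⟩ := block_of_eq_two hw hm₂
  have hi₃ : w (i + 1) = 3 := by rwa [hx.head hn, ← hm]
  rcases hctx with h₀ | ⟨h₂, hend⟩
  · obtain ⟨mi, hmi, hmi₀ | hmi₂⟩ := exists_block_of_eq_zero hw h₀
    · have := (block_of_eq_zero hw hmi₀).2.1; rw [hmi] at this; omega
    obtain ⟨-, -, hi₂, hs'⟩ := block_of_eq_two hw hmi₂
    have hn₂ : 2 ≤ n := by
      by_contra
      rw [hmi, show i + 2 = φ m by omega, hc] at hi₂
      omega
    obtain ⟨ν, rfl⟩ := Nat.exists_eq_add_of_le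
      ((blockStart_strictMono g_ne_nil).le_iff_le.mp (show φ (mi + 1) ≤ φ m by omega))
    obtain ⟨hsq, -⟩ := desubstitute hw hx (a := 2) (m := mi + 1) (ν := ν) (by omega) (by omega)
      (by omega)
    have hν := add_le_blockStart_add g_ne_nil (w := w) (mi + 1) ν
    rcases Nat.eq_zero_or_pos ν with rfl | hν₀
    · exact absurd hm₂ (succ_ne_two_of_eq_two hw hmi₂)
    · exact ⟨ν, by omega, hν₀, .two mi (.inr hmi₂) hsq hm₂⟩
  · obtain ⟨mi, rfl, hmi₁⟩ := exists_block_of_eq_two hw h₂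
    have hs' := (block_of_eq_one hw hmi₁).2
    have := succ_ne_one_of_blockStart_eq_three hw (m := mi + 1) (by rwa [hs'])
    rw [hs'] at this
    rcases Nat.lt_or_ge n 2 with hn₁ | hn₂
    · rw [show φ mi + 2 * n + 2 = φ m + 2 by omega, h₁] at hend
      omega
    · have := hx 1 hn₂
      rw [show φ mi + 1 + n + 1 + 1 = φ m + 2 by omega, h₁] at this
      omega

theorem exists_shorter_of_zero (hw : IsFixedPoint g w) {i n : ℕ} (hn : 0 < n)
    (hctx : w i = 0 ∨ w i = 2 ∧ (w (i + 2 * n + 2) = 0 ∨ w (i + 2 * n + 2) = 2))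
    (hx : IsGappedSquareAt w (i + 1) n) (hc : w (i + 1 + n) = 0) :
    ∃ n' < n, 0 < n' ∧ Forbidden w n' := by
  obtain ⟨m, hm, hm₀ | hm₂⟩ := exists_block_of_eq_zero hw hc
  · exact exists_shorter_of_zero_of_block_zero hw hn (hctx.imp_right And.left) hx hm hm₀
  · exact exists_shorter_of_zero_of_block_two hw hn hctx hx hm hm₂

theorem Forbidden.exists_shorter (hw : IsFixedPoint g w) (hw₀ : w 0 = 0) {n : ℕ} (hn : 0 < n)
    (h : Forbidden w n) : ∃ n' < n, 0 < n' ∧ Forbidden w n' := by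
  cases h with
  | three i hx hc => exact exists_shorter_of_three hw hw₀ hn hx hc
  | two i hctx hx hc => exact exists_shorter_of_two hw hn hctx hx hc
  | one i hctx hx hc => exact exists_shorter_of_one hw hn hctx hx hc
  | zero i hctx hx hc => exact exists_shorter_of_zero hw hn hctx hx hc

theorem not_forbidden (hw : IsFixedPoint g w) (hw₀ : w 0 = 0) {n : ℕ} (hn : 0 < n) :
    ¬Forbidden w n := by
  induction n using Nat.strong_induction_on with
  | _ n ih =>
    intro h
    obtain ⟨n', hlt, hpos, h'⟩ := h.exists_shorter hw hw₀ hn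
    exact ih n' hlt hpos h'

end

theorem isFixedPoint_of_isFixedPointG {w : ℕ → ℕ} (hw : IsFixedPointG w) : IsFixedPoint g w :=
  isFixedPoint_of_prefixes _ (fun n => Function.iterate_succ_apply' _ n [0])
    (fun n => by
      obtain ⟨t, ht, hn⟩ :=
        exists_iterate_flatMap_eq_cons (σ := g) (a := 0) rfl (by simp) g_ne_nil n
      simp [ht]
      omega)
    fun n i hi => Option.some_injective _ (List.getElem?_eq_getElem hi ▸ hw n i hi)

theorem exists_isGappedSquareAt_of_isFactorOf {w : ℕ → ℕ} {U : List ℕ} {c : ℕ}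
    (h : IsFactorOf (U ++ [c] ++ U) w) :
    ∃ i, IsGappedSquareAt w i U.length ∧ w (i + U.length) = c := by
  obtain ⟨i, hi⟩ := h
  have hlen : (U ++ [c] ++ U).length = U.length + 1 + U.length := by simp; omega
  have hget : ∀ k (hk : k < (U ++ [c] ++ U).length), w (i + k) = (U ++ [c] ++ U)[k] :=
    fun k hk => by rw [List.getElem_of_eq hi hk]; simp
  refine ⟨i, fun k hk => ?_, ?_⟩
  · rw [hget k (by omega), Nat.add_assoc i, Nat.add_assoc i, hget _ (by omega),
      List.getElem_append_left (by simp; omega), List.getElem_append_left hk,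
      List.getElem_append_right (by simp)]
    simp
  · rw [hget _ (by omega)]
    simp

end GFixedPoint

/-- g^ω(0) avoids the pattern with constants x3x. -/
theorem g_fixed_point_avoids_x3x (w : ℕ → ℕ) (hw : IsFixedPointG w) :
    ∀ U : List ℕ, U ≠ [] → ¬ IsFactorOf (U ++ [3] ++ U) w := by
  intro U hU hfac
  obtain ⟨i, hx, hc⟩ := GFixedPoint.exists_isGappedSquareAt_of_isFactorOf hfac
  have hw₀ : w 0 = 0 := Option.some_injective _ (hw 0 0 (by simp)).symm
  exact GFixedPoint.not_forbidden (GFixedPoint.isFixedPoint_of_isFixedPointG hw) hw₀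
    (List.length_pos_iff.mpr hU) (.three i hx hc)
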